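/- Let a = (a_1,…,a_n) be a non-decreasing sequence of positive integers, let 𝓗̃_a ⊆ 𝓗_a be the set of properly filled horizontal strips having at least one moveable cell, and define ψ : 𝓗̃_a → 𝓗̃_a by moving the rightmost moveable cell one row in its assigned direction. Then ψ is a fixed-point-free involution satisfying s(ψ(H)) = s(H) ± 1 for all H ∈ 𝓗̃_a; consequently Σ_{H∈𝓗̃_a} (−1)^{s(H)} = 0 and I_a(−1) = Σ_{H∈𝓗_a∖𝓗̃_a} (−1)^{s(H)}. -/

import Mathlib

open Finset
open scoped Classical

/-- `b` is an `a`-parking function: all entries are positive and the increasing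
rearrangement `b ∘ Tuple.sort b` satisfies `b'_i ≤ a_i` (here `a` is 1-indexed). -/
def IsAPF {n : ℕ} (a : ℕ → ℕ) (b : Fin n → ℕ) : Prop :=
  (∀ i, 1 ≤ b i) ∧ ∀ i : Fin n, (b ∘ Tuple.sort b) i ≤ a ((i : ℕ) + 1)

/-- A properly filled horizontal strip inside the Young diagram `Y_a`
(columns 0-indexed from the left by `c : Fin n`, so the (0-indexed) column `c`
has length `a (n - c)`; rows are 1-indexed from the top; `num c ∈ {1, …, n}` is
the number written in the cell of column `c`). -/
def IsPFHS {n : ℕ} (a : ℕ → ℕ) (row num : Fin n → ℕ) : Prop :=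
  (∀ c : Fin n, 1 ≤ row c ∧ row c ≤ a (n - (c : ℕ))) ∧
  (∀ c c' : Fin n, c ≤ c' → row c' ≤ row c) ∧
  (∀ c, 1 ≤ num c ∧ num c ≤ n) ∧
  Function.Injective num ∧
  (∀ c c' : Fin n, c < c' → row c = row c' → (Odd (row c) ↔ num c < num c'))

/-- The number written immediately to the right of column `c`, with the imaginary
cell `σ_{n+1} = n + 1` just outside the diagram. -/
def nextVal {n : ℕ} (num : Fin n → ℕ) (c : Fin n) : ℕ :=
  if h : (c : ℕ) + 1 < n then num ⟨(c : ℕ) + 1, h⟩ else n + 1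

/-- The assigned direction of the cell in column `c` is *up*, i.e.
`ε_c = sgn(σ_c - σ_{c+1}) (-1)^{r(σ_c)} = -1`. -/
def AssignedUp {n : ℕ} (row num : Fin n → ℕ) (c : Fin n) : Prop :=
  (nextVal num c < num c ∧ Odd (row c)) ∨ (num c < nextVal num c ∧ Even (row c))

/-- The cell in column `c` is moveable up: its assigned direction is up. -/
def MoveableUp {n : ℕ} (row num : Fin n → ℕ) (c : Fin n) : Prop :=
  AssignedUp row num c

/-- The cell in column `c` is moveable down: its assigned direction is down, it is not
the bottom cell of its column, and moving it one row down again yields a properly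
filled horizontal strip. -/
def MoveableDown {n : ℕ} (a : ℕ → ℕ) (row num : Fin n → ℕ) (c : Fin n) : Prop :=
  ¬AssignedUp row num c ∧ row c < a (n - (c : ℕ)) ∧
    IsPFHS a (Function.update row c (row c + 1)) num

/-- The set of (columns of) moveable cells of a strip. -/
noncomputable def moveSet {n : ℕ} (a : ℕ → ℕ) (row num : Fin n → ℕ) : Finset (Fin n) :=
  Finset.univ.filter fun c => MoveableUp row num c ∨ MoveableDown a row num c

/-- `s(H)`: the number of cells of `Y_a` lying strictly above a cell of the strip
with row function `row`. -/
def sCells {n : ℕ} (a : ℕ → ℕ) (row : Fin n → ℕ) : ℕ :=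
  (((Finset.Icc 1 (a n)) ×ˢ (Finset.univ : Finset (Fin n))).filter
    (fun rc => rc.1 ≤ a (n - (rc.2 : ℕ)) ∧ rc.1 < row rc.2)).card

/-- The involution `ψ`: move the rightmost moveable cell one row in its assigned
direction (identity if there are no moveable cells). -/
noncomputable def psiFn {n : ℕ} (a : ℕ → ℕ) (H : (Fin n → ℕ) × (Fin n → ℕ)) :
    (Fin n → ℕ) × (Fin n → ℕ) :=
  if h : (moveSet a H.1 H.2).Nonempty then
    let c := (moveSet a H.1 H.2).max' h
    (Function.update H.1 c
      (if AssignedUp H.1 H.2 c then H.1 c - 1 else H.1 c + 1), H.2)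
  else H

/-!
Properness of a strip is a condition on adjacent columns only. So moving the cell of column `c`
by one row only affects its conditions with columns `c - 1` and `c + 1`; its assigned direction
flips with the parity of its row, and is exactly the one for which column `c + 1` can move down
before the move iff it can after it. Hence the moveable cells right of `c` are the same for `H`
and for `ψ(H)`, the rightmost moveable cell of `ψ(H)` is again `c`, and `ψ` moves it back. Each
move changes `s` by one, so `ψ` pairs the strips of `𝓗̃_a` with opposite signs. The value
`I_a(-1)` is transported along the standard bijection `b ↦ H(b)`, which writes the number `i`
in row `b_i` and orders each row by the parity rule.
-/

/-- The condition a proper strip imposes on two adjacent columns in rows `r`, `r'` with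
numbers `m`, `m'`. -/
def ProperAdj (r r' m m' : ℕ) : Prop :=
  r' ≤ r ∧ (r' = r → (Odd r ↔ m < m'))

theorem properAdj_succ_left_iff {r r' m m' : ℕ} (hr : r' ≤ r) (hpar : Odd r ↔ m < m') :
    ProperAdj (r + 1) (r' + 1) m m' ↔ ProperAdj r (r' + 1) m m' := by
  unfold ProperAdj
  rw [Nat.odd_add_one]
  constructor
  · rintro ⟨-, hsame⟩
    have hlt : r' < r := hr.lt_of_ne fun he => by have := hsame (by rw [he]); tauto
    exact ⟨hlt, fun _ => hpar⟩
  · rintro ⟨hlt, -⟩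
    exact ⟨by omega, fun he => absurd he (by omega)⟩

theorem Fin.rel_of_forall_rel_adjacent {n : ℕ} {R : Fin n → Fin n → Prop}
    (htrans : ∀ x y z, R x y → R y z → R x z)
    (hadj : ∀ c d : Fin n, (d : ℕ) = c + 1 → R c d) {c d : Fin n} (hcd : c < d) : R c d := by
  obtain ⟨k, hk⟩ := d
  induction k with
  | zero => exact absurd (Fin.lt_def.mp hcd) (Nat.not_lt_zero _)
  | succ k ih =>
    have hck : (c : ℕ) ≤ k := Nat.lt_succ_iff.mp hcd
    rcases hck.eq_or_lt with hck | hck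
    · exact hadj c _ (by simp [hck])
    · exact htrans _ ⟨k, by omega⟩ _ (ih (by omega) hck) (hadj _ _ rfl)

namespace IsPFHS

variable {n : ℕ} {a : ℕ → ℕ} {row num : Fin n → ℕ}

theorem one_le_row (h : IsPFHS a row num) (c : Fin n) : 1 ≤ row c := (h.1 c).1

theorem row_le (h : IsPFHS a row num) (c : Fin n) : row c ≤ a (n - c) := (h.1 c).2

theorem row_antitone (h : IsPFHS a row num) : Antitone row := fun c c' => h.2.1 c c'

theorem one_le_num (h : IsPFHS a row num) (c : Fin n) : 1 ≤ num c := (h.2.2.1 c).1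

theorem num_le (h : IsPFHS a row num) (c : Fin n) : num c ≤ n := (h.2.2.1 c).2

theorem num_injective (h : IsPFHS a row num) : Function.Injective num := h.2.2.2.1

theorem odd_iff (h : IsPFHS a row num) {c d : Fin n} (hcd : c < d) (hrow : row c = row d) :
    Odd (row c) ↔ num c < num d :=
  h.2.2.2.2 c d hcd hrow

end IsPFHS

section Strips

variable {n : ℕ} {a : ℕ → ℕ} {row num : Fin n → ℕ}

theorem isPFHS_iff_properAdj : IsPFHS a row num ↔
    (∀ c : Fin n, 1 ≤ row c ∧ row c ≤ a (n - c)) ∧ (∀ c, 1 ≤ num c ∧ num c ≤ n) ∧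
      Function.Injective num ∧
      ∀ c d : Fin n, (d : ℕ) = c + 1 → ProperAdj (row c) (row d) (num c) (num d) := by
  refine ⟨fun h => ⟨h.1, h.2.2.1, h.num_injective, fun c d hcd => ?_⟩,
    fun ⟨hrow, hnum, hinj, hadj⟩ => ?_⟩
  · have hlt : c < d := Fin.lt_def.mpr (by omega)
    exact ⟨h.row_antitone hlt.le, fun hrow => h.odd_iff hlt hrow.symm⟩
  -- Along a block of equal rows the numbers are strictly monotone in the direction fixed by the
  -- parity of the row, so comparing adjacent columns suffices.
  let R : Fin n → Fin n → Prop := fun c d => row d ≤ row c ∧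
    (row d = row c → (Odd (row c) → num c < num d) ∧ (¬Odd (row c) → num d < num c))
  have htrans : ∀ x y z, R x y → R y z → R x z := by
    intro x y z hxy hyz
    refine ⟨hyz.1.trans hxy.1, fun hzx => ?_⟩
    have hyx : row y = row x := le_antisymm hxy.1 (hzx ▸ hyz.1)
    have hzy : row z = row y := hzx.trans hyx.symm
    rw [← hyx]
    exact ⟨fun ho => ((hxy.2 hyx).1 (hyx ▸ ho)).trans ((hyz.2 hzy).1 ho),
      fun ho => ((hyz.2 hzy).2 ho).trans ((hxy.2 hyx).2 (hyx ▸ ho))⟩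
  have hRadj : ∀ c d : Fin n, (d : ℕ) = c + 1 → R c d := by
    intro c d hcd
    obtain ⟨hle, hpar⟩ := hadj c d hcd
    have hne : num c ≠ num d := fun he => by
      have := congrArg Fin.val (hinj he); omega
    exact ⟨hle, fun he => ⟨(hpar he).mp, fun ho => by have := (hpar he).not.mp ho; omega⟩⟩
  have hR : ∀ c d : Fin n, c < d → R c d := fun c d =>
    Fin.rel_of_forall_rel_adjacent htrans hRadj
  refine ⟨hrow, fun c d hcd => ?_, hnum, hinj, fun c d hcd hrow => ?_⟩
  · rcases hcd.lt_or_eq with hcd | rfl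
    exacts [(hR c d hcd).1, le_rfl]
  · obtain ⟨hodd, heven⟩ := (hR c d hcd).2 hrow.symm
    exact ⟨hodd, fun hlt => by_contra fun ho => absurd hlt (heven ho).not_gt⟩

theorem isPFHS_update_iff (h : IsPFHS a row num) (c : Fin n) (v : ℕ) :
    IsPFHS a (Function.update row c v) num ↔ (1 ≤ v ∧ v ≤ a (n - c)) ∧
      (∀ x : Fin n, (c : ℕ) = x + 1 → ProperAdj (row x) v (num x) (num c)) ∧
      (∀ z : Fin n, (z : ℕ) = c + 1 → ProperAdj v (row z) (num c) (num z)) := by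
  obtain ⟨hrow, hnum, hinj, hadj⟩ := isPFHS_iff_properAdj.mp h
  have hne : ∀ {x y : Fin n}, (y : ℕ) = x + 1 → x ≠ y := fun hxy he => by
    rw [he] at hxy; omega
  rw [isPFHS_iff_properAdj]
  constructor
  · rintro ⟨hrow', -, -, hadj'⟩
    refine ⟨by simpa using hrow' c, fun x hx => ?_, fun z hz => ?_⟩
    · simpa [Function.update_of_ne (hne hx)] using hadj' x c hx
    · simpa [Function.update_of_ne (hne hz).symm] using hadj' c z hz
  · rintro ⟨hv, hleft, hright⟩
    refine ⟨fun x => ?_, hnum, hinj, fun x z hxz => ?_⟩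
    · rcases eq_or_ne x c with rfl | hx
      · simpa using hv
      · simpa [Function.update_of_ne hx] using hrow x
    · rcases eq_or_ne z c with rfl | hz
      · simpa [Function.update_of_ne (hne hxz)] using hleft x hxz
      rcases eq_or_ne x c with rfl | hx
      · simpa [Function.update_of_ne hz] using hright z hxz
      simpa [Function.update_of_ne hx, Function.update_of_ne hz] using hadj x z hxz

end Strips

section Moves

variable {n : ℕ} {a : ℕ → ℕ} {row num : Fin n → ℕ} {c : Fin n}

theorem nextVal_of_adjacent {d : Fin n} (hcd : (d : ℕ) = c + 1) : nextVal num c = num d := by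
  rw [nextVal, dif_pos (hcd ▸ d.isLt)]
  exact congrArg num (Fin.ext hcd.symm)

theorem nextVal_of_last (hc : n ≤ c + 1) : nextVal num c = n + 1 := by
  rw [nextVal, dif_neg (by omega)]

theorem IsPFHS.nextVal_ne (h : IsPFHS a row num) (c : Fin n) : nextVal num c ≠ num c := by
  by_cases hc : (c : ℕ) + 1 < n
  · rw [nextVal_of_adjacent (d := ⟨c + 1, hc⟩) rfl]
    exact fun he => absurd (congrArg Fin.val (h.num_injective he)) (by simp)
  · rw [nextVal_of_last (by omega)]
    have := h.num_le c
    omega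

theorem assignedUp_iff (hne : nextVal num c ≠ num c) :
    AssignedUp row num c ↔ (Odd (row c) ↔ nextVal num c < num c) := by
  unfold AssignedUp
  rw [← Nat.not_odd_iff_even]
  rcases hne.lt_or_gt with hlt | hgt
  · simp [hlt, hlt.not_gt]
  · simp [hgt, hgt.not_gt]

theorem not_assignedUp_iff (hne : nextVal num c ≠ num c) :
    ¬AssignedUp row num c ↔ (Odd (row c) ↔ num c < nextVal num c) := by
  rw [assignedUp_iff hne]
  rcases hne.lt_or_gt with hlt | hgt
  · simp [hlt, hlt.not_gt]
  · simp [hgt, hgt.not_gt]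

theorem assignedUp_update_of_ne {y : Fin n} (hy : y ≠ c) (v : ℕ) :
    AssignedUp (Function.update row c v) num y ↔ AssignedUp row num y := by
  rw [AssignedUp, AssignedUp, Function.update_of_ne hy]

namespace IsPFHS

theorem row_lt_of_assignedUp (h : IsPFHS a row num) (hup : AssignedUp row num c) {d : Fin n}
    (hcd : (d : ℕ) = c + 1) : row d < row c := by
  have hlt : c < d := Fin.lt_def.mpr (by omega)
  refine (h.row_antitone hlt.le).lt_of_ne fun hrow => ?_
  have hne : num d ≠ num c := fun he => hlt.ne' (h.num_injective he)
  have hsame := h.odd_iff hlt hrow.symm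
  rw [assignedUp_iff (h.nextVal_ne c), nextVal_of_adjacent hcd] at hup
  rcases hne.lt_or_gt with hne | hne <;> simp_all [hne.not_gt]

theorem two_le_row_of_assignedUp (h : IsPFHS a row num) (hup : AssignedUp row num c) :
    2 ≤ row c := by
  by_cases hc : (c : ℕ) + 1 < n
  · have := h.row_lt_of_assignedUp hup (d := ⟨c + 1, hc⟩) rfl
    have := h.one_le_row ⟨c + 1, hc⟩
    omega
  · rw [assignedUp_iff (h.nextVal_ne c), nextVal_of_last (by omega)] at hup
    have hodd : ¬Odd (row c) := fun ho => by have := hup.mp ho; have := h.num_le c; omega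
    have := h.one_le_row c
    rw [Nat.not_odd_iff_even] at hodd
    rcases hodd with ⟨k, hk⟩
    omega

theorem update_pred (h : IsPFHS a row num) (hup : AssignedUp row num c) :
    IsPFHS a (Function.update row c (row c - 1)) num := by
  have h2 := h.two_le_row_of_assignedUp hup
  refine (isPFHS_update_iff h c _).mpr ⟨⟨by omega, by have := h.row_le c; omega⟩,
    fun x hx => ⟨?_, fun he => ?_⟩, fun z hz => ⟨?_, fun he => ?_⟩⟩
  · have := h.row_antitone (Fin.lt_def.mpr (by omega) : x < c).le
    omega
  · have := h.row_antitone (Fin.lt_def.mpr (by omega) : x < c).le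
    omega
  · have := h.row_lt_of_assignedUp hup hz
    omega
  · rw [assignedUp_iff (h.nextVal_ne c), nextVal_of_adjacent hz] at hup
    have hne : num z ≠ num c := fun he => by
      have := congrArg Fin.val (h.num_injective he); omega
    rw [Nat.odd_sub (by omega : 1 ≤ row c), hup]
    simp only [Nat.not_even_one, iff_false]
    omega

theorem moveableDown_update_pred (h : IsPFHS a row num) (hup : AssignedUp row num c) :
    MoveableDown a (Function.update row c (row c - 1)) num c := by
  have h2 := h.two_le_row_of_assignedUp hup
  refine ⟨?_, ?_, ?_⟩
  · rw [assignedUp_iff (h.nextVal_ne c)] at hup ⊢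
    rw [Function.update_self, Nat.odd_sub (by omega : 1 ≤ row c), hup]
    simp only [Nat.not_even_one, iff_false]
    tauto
  · have := h.row_le c
    simp only [Function.update_self]
    omega
  · rw [Function.update_idem, Function.update_self, Nat.sub_add_cancel (by omega),
      Function.update_eq_self]
    exact h

end IsPFHS

end Moves

section Involution

variable {n : ℕ} {a : ℕ → ℕ} {row num : Fin n → ℕ} {c : Fin n}

theorem sCells_add_eq_sum (hmono : MonotoneOn a (Set.Icc 1 n))
    (hrow : ∀ c : Fin n, 1 ≤ row c ∧ row c ≤ a (n - c)) : sCells a row + n = ∑ c, row c := by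
  have hcol : ∀ c : Fin n, ((Finset.Icc 1 (a n)).filter
      fun r => r ≤ a (n - c) ∧ r < row c) = Finset.Ico 1 (row c) := by
    intro c
    have := hrow c
    have := c.isLt
    have : a (n - c) ≤ a n := hmono ⟨by omega, by omega⟩ ⟨by omega, le_rfl⟩ (by omega)
    ext r
    simp only [Finset.mem_filter, Finset.mem_Icc, Finset.mem_Ico]
    omega
  rw [sCells, Finset.card_filter, Finset.sum_product_right]
  simp only [← Finset.card_filter, hcol, Nat.card_Ico]
  rw [Finset.sum_congr rfl fun c _ => (Nat.sub_add_cancel (hrow c).1).symm,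
    Finset.sum_add_distrib]
  simp

theorem sCells_update_succ (hmono : MonotoneOn a (Set.Icc 1 n)) (h : IsPFHS a row num)
    (hd : MoveableDown a row num c) :
    sCells a (Function.update row c (row c + 1)) = sCells a row + 1 := by
  have hmoved := sCells_add_eq_sum hmono hd.2.2.1
  have hrow := sCells_add_eq_sum hmono h.1
  rw [Finset.sum_update_of_mem (Finset.mem_univ c)] at hmoved
  rw [Finset.sum_eq_add_sum_sdiff_singleton_of_mem (Finset.mem_univ c)] at hrow
  omega

theorem assignedUp_update_succ (h : IsPFHS a row num) (hd : MoveableDown a row num c) :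
    AssignedUp (Function.update row c (row c + 1)) num c := by
  have hdown := hd.1
  rw [assignedUp_iff (h.nextVal_ne c)] at hdown ⊢
  rw [Function.update_self, Nat.odd_add_one]
  tauto

-- Moving the cell of column `c` only changes the left-neighbour condition of column `c + 1`,
-- and the assigned direction of `c` makes that condition read `row (c + 1) < row c` both before
-- and after the move.
theorem moveableDown_update_succ_iff (h : IsPFHS a row num) (hd : MoveableDown a row num c)
    {y : Fin n} (hcy : c < y) :
    MoveableDown a (Function.update row c (row c + 1)) num y ↔ MoveableDown a row num y := by
  have hyc : y ≠ c := hcy.ne'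
  simp only [MoveableDown, Function.update_of_ne hyc, assignedUp_update_of_ne hyc,
    isPFHS_update_iff hd.2.2, isPFHS_update_iff h]
  refine and_congr_right' (and_congr_right' (and_congr_right' (and_congr ?_ ?_)))
  · refine forall_congr' fun x => imp_congr_right fun hx => ?_
    rcases eq_or_ne x c with rfl | hxc
    · rw [Function.update_self]
      refine properAdj_succ_left_iff (h.row_antitone hcy.le) ?_
      have := (not_assignedUp_iff (h.nextVal_ne x)).mp hd.1
      rwa [nextVal_of_adjacent hx] at this
    · rw [Function.update_of_ne hxc]
  · refine forall_congr' fun z => imp_congr_right fun hz => ?_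
    rw [Function.update_of_ne (hcy.trans (Fin.lt_def.mpr (by omega))).ne']

theorem mem_moveSet :
    c ∈ moveSet a row num ↔ AssignedUp row num c ∨ MoveableDown a row num c := by
  rw [moveSet, Finset.mem_filter, MoveableUp]
  exact and_iff_right (Finset.mem_univ c)

theorem forall_mem_moveSet_update_succ_le_iff (h : IsPFHS a row num)
    (hd : MoveableDown a row num c) :
    (∀ y ∈ moveSet a (Function.update row c (row c + 1)) num, y ≤ c) ↔
      ∀ y ∈ moveSet a row num, y ≤ c := by
  refine forall_congr' fun y => ?_
  by_cases hy : y ≤ c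
  · simp only [hy, implies_true]
  · have hcy := not_le.mp hy
    rw [mem_moveSet, mem_moveSet, assignedUp_update_of_ne hcy.ne',
      moveableDown_update_succ_iff h hd hcy]

theorem mem_moveSet_of_moveableDown (hd : MoveableDown a row num c) : c ∈ moveSet a row num :=
  mem_moveSet.mpr (Or.inr hd)

theorem mem_moveSet_update_succ (h : IsPFHS a row num) (hd : MoveableDown a row num c) :
    c ∈ moveSet a (Function.update row c (row c + 1)) num :=
  mem_moveSet.mpr (Or.inl (assignedUp_update_succ h hd))

theorem psiFn_eq (hc : c ∈ moveSet a row num) (hmax : ∀ y ∈ moveSet a row num, y ≤ c) :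
    psiFn a (row, num) = (Function.update row c
      (if AssignedUp row num c then row c - 1 else row c + 1), num) := by
  have hne : (moveSet a row num).Nonempty := ⟨c, hc⟩
  have hc' : (moveSet a row num).max' hne = c :=
    le_antisymm (Finset.max'_le _ _ _ hmax) (Finset.le_max' _ _ hc)
  simp only [psiFn, dif_pos hne, hc']

theorem psiFn_of_moveableDown (hd : MoveableDown a row num c)
    (hmax : ∀ y ∈ moveSet a row num, y ≤ c) :
    psiFn a (row, num) = (Function.update row c (row c + 1), num) := by
  rw [psiFn_eq (mem_moveSet_of_moveableDown hd) hmax, if_neg hd.1]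

theorem psiFn_update_succ (h : IsPFHS a row num) (hd : MoveableDown a row num c)
    (hmax : ∀ y ∈ moveSet a row num, y ≤ c) :
    psiFn a (Function.update row c (row c + 1), num) = (row, num) := by
  rw [psiFn_eq (mem_moveSet_update_succ h hd)
      ((forall_mem_moveSet_update_succ_le_iff h hd).mpr hmax),
    if_pos (assignedUp_update_succ h hd), Function.update_idem, Function.update_self,
    Nat.add_sub_cancel, Function.update_eq_self]

theorem exists_moveableDown_of_nonempty (h : IsPFHS a row num)
    (hne : (moveSet a row num).Nonempty) :
    ∃ (P : Fin n → ℕ) (c : Fin n), IsPFHS a P num ∧ MoveableDown a P num c ∧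
      (∀ y ∈ moveSet a P num, y ≤ c) ∧ (row = P ∨ row = Function.update P c (P c + 1)) := by
  set c := (moveSet a row num).max' hne
  have hmax : ∀ y ∈ moveSet a row num, y ≤ c := fun y hy => Finset.le_max' _ _ hy
  by_cases hup : AssignedUp row num c
  · have hP := h.update_pred hup
    have hd := h.moveableDown_update_pred hup
    have hback : Function.update (Function.update row c (row c - 1)) c
        (Function.update row c (row c - 1) c + 1) = row := by
      rw [Function.update_idem, Function.update_self,
        Nat.sub_add_cancel (by have := h.two_le_row_of_assignedUp hup; omega),
        Function.update_eq_self]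
    refine ⟨_, c, hP, hd, ?_, Or.inr hback.symm⟩
    rw [← forall_mem_moveSet_update_succ_le_iff hP hd, hback]
    exact hmax
  · have hc : c ∈ moveSet a row num := Finset.max'_mem _ _
    exact ⟨row, c, h, (mem_moveSet.mp hc).resolve_left hup, hmax, Or.inl rfl⟩

theorem psiFn_spec (hmono : MonotoneOn a (Set.Icc 1 n)) {H : (Fin n → ℕ) × (Fin n → ℕ)}
    (h : IsPFHS a H.1 H.2) (hne : (moveSet a H.1 H.2).Nonempty) :
    (IsPFHS a (psiFn a H).1 (psiFn a H).2 ∧ (moveSet a (psiFn a H).1 (psiFn a H).2).Nonempty) ∧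
      psiFn a (psiFn a H) = H ∧ psiFn a H ≠ H ∧
      (sCells a (psiFn a H).1 = sCells a H.1 + 1 ∨ sCells a H.1 = sCells a (psiFn a H).1 + 1) := by
  obtain ⟨row, num⟩ := H
  obtain ⟨P, c, hP, hd, hmax, hrow⟩ := exists_moveableDown_of_nonempty h hne
  have hmoved : Function.update P c (P c + 1) ≠ P := fun he => by
    simpa using congrFun he c
  rcases hrow with rfl | rfl
  · rw [psiFn_of_moveableDown hd hmax, psiFn_update_succ hP hd hmax]
    exact ⟨⟨hd.2.2, c, mem_moveSet_update_succ hP hd⟩, rfl,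
      fun he => hmoved (congrArg Prod.fst he), Or.inl (sCells_update_succ hmono hP hd)⟩
  · rw [psiFn_update_succ hP hd hmax, psiFn_of_moveableDown hd hmax]
    exact ⟨⟨hP, c, mem_moveSet_of_moveableDown hd⟩, rfl,
      fun he => hmoved (congrArg Prod.fst he).symm, Or.inr (sCells_update_succ hmono hP hd)⟩

end Involution

section Counting

variable {n : ℕ} {a : ℕ → ℕ}

theorem setOf_isPFHS_finite : {H : (Fin n → ℕ) × (Fin n → ℕ) | IsPFHS a H.1 H.2}.Finite :=
  ((Set.Finite.pi fun c : Fin n => Set.finite_Iic (a (n - c))).prod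
    (Set.Finite.pi fun _ => Set.finite_Iic n)).subset
    fun _ h => ⟨fun c _ => h.row_le c, fun c _ => h.num_le c⟩

theorem finsum_sign_moveable_eq_zero (hmono : MonotoneOn a (Set.Icc 1 n)) :
    ∑ᶠ H ∈ {H : (Fin n → ℕ) × (Fin n → ℕ) | IsPFHS a H.1 H.2 ∧ (moveSet a H.1 H.2).Nonempty},
      (-1 : ℤ) ^ sCells a H.1 = 0 := by
  have hfin : {H : (Fin n → ℕ) × (Fin n → ℕ) |
      IsPFHS a H.1 H.2 ∧ (moveSet a H.1 H.2).Nonempty}.Finite :=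
    setOf_isPFHS_finite.subset fun _ h => h.1
  rw [finsum_mem_eq_finite_toFinset_sum _ hfin]
  have hspec : ∀ H ∈ hfin.toFinset, _ := fun H hH =>
    psiFn_spec hmono ((hfin.mem_toFinset).mp hH).1 ((hfin.mem_toFinset).mp hH).2
  refine Finset.sum_involution (fun H _ => psiFn a H) (fun H hH => ?_)
    (fun H hH _ => (hspec H hH).2.2.1) (fun H hH => hfin.mem_toFinset.mpr (hspec H hH).1)
    (fun H hH => (hspec H hH).2.1)
  rcases (hspec H hH).2.2.2 with hs | hs <;> rw [hs, pow_succ] <;> ring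

/-- Sort key of the cells of the strip of a parking function `b`, in which the number `i + 1`
sits in row `b i`: from left to right a strip climbs weakly, and within a row its numbers
increase in odd rows and decrease in even rows. -/
def cellKey (b : Fin n → ℕ) (i : Fin n) : ℤ ×ₗ ℤ :=
  toLex (-(b i : ℤ), if Odd (b i) then (i : ℤ) else -(i : ℤ))

/-- The standard bijection `b ↦ H(b)`: column `c` holds the number `σ c + 1` in row `b (σ c)`,
where `σ` sorts the cells by `cellKey`. -/
def stripOf (b : Fin n → ℕ) : (Fin n → ℕ) × (Fin n → ℕ) :=
  (b ∘ Tuple.sort (cellKey b), fun c => (Tuple.sort (cellKey b) c : ℕ) + 1)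

variable {b : Fin n → ℕ}

theorem cellKey_le_cellKey_iff {i j : Fin n} : cellKey b i ≤ cellKey b j ↔
    b j < b i ∨ b i = b j ∧ (Odd (b i) → i ≤ j) ∧ (¬Odd (b i) → j ≤ i) := by
  rw [cellKey, cellKey, Prod.Lex.toLex_le_toLex, Fin.le_def, Fin.le_def]
  by_cases hij : b i = b j
  · rw [hij]
    split_ifs <;> simp [*]
  · simp only [hij, false_and, or_false]
    omega

theorem cellKey_injective : Function.Injective (cellKey b) := by
  intro i j h
  have hle := cellKey_le_cellKey_iff.mp h.le
  have hge := cellKey_le_cellKey_iff.mp h.ge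
  have hb : b i = b j := by omega
  rcases hle with hlt | ⟨-, hodd, heven⟩
  · omega
  rcases hge with hlt | ⟨-, hodd', heven'⟩
  · omega
  by_cases ho : Odd (b i)
  · exact le_antisymm (hodd ho) (hodd' (hb ▸ ho))
  · exact le_antisymm (heven' (hb ▸ ho)) (heven ho)

theorem monotone_cellKey_comp_iff (σ : Equiv.Perm (Fin n)) :
    Monotone (cellKey b ∘ σ) ↔ Antitone (b ∘ σ) ∧
      ∀ c d, c < d → b (σ c) = b (σ d) → (Odd (b (σ c)) ↔ σ c < σ d) := by
  simp only [monotone_iff_forall_lt, antitone_iff_forall_lt, Function.comp_apply,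
    cellKey_le_cellKey_iff]
  constructor
  · intro h
    refine ⟨fun c d hcd => ?_, fun c d hcd hb => ?_⟩
    · rcases h hcd with hlt | ⟨hb, -⟩
      exacts [hlt.le, hb.ge]
    · have hne : σ c ≠ σ d := σ.injective.ne hcd.ne
      rcases h hcd with hlt | ⟨-, hodd, heven⟩
      · omega
      by_cases ho : Odd (b (σ c))
      · exact iff_of_true ho ((hodd ho).lt_of_ne hne)
      · exact iff_of_false ho (heven ho).not_gt
  · rintro ⟨hanti, hodd⟩ c d hcd
    rcases (hanti hcd).lt_or_eq with hlt | hb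
    · exact Or.inl hlt
    · have := hodd c d hcd hb.symm
      exact Or.inr ⟨hb.symm, fun ho => (this.mp ho).le, fun ho => not_lt.mp (this.not.mp ho)⟩

theorem eq_sort_cellKey_iff (σ : Equiv.Perm (Fin n)) :
    σ = Tuple.sort (cellKey b) ↔ Monotone (cellKey b ∘ σ) := by
  rw [Tuple.eq_sort_iff]
  refine and_iff_left_of_imp fun _ i j hij he => ?_
  exact absurd (σ.injective (cellKey_injective he)) hij.ne

theorem isAPF_iff_of_antitone (σ : Equiv.Perm (Fin n)) (hσ : Antitone (b ∘ σ)) :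
    IsAPF a b ↔ (∀ i, 1 ≤ b i) ∧ ∀ c, b (σ c) ≤ a (n - c) := by
  have hsort : b ∘ (Fin.revPerm.trans σ) = b ∘ Tuple.sort b :=
    Tuple.comp_sort_eq_comp_iff_monotone.mpr (hσ.comp Fin.rev_anti)
  rw [IsAPF, ← hsort]
  refine and_congr_right' ⟨fun h c => ?_, fun h i => ?_⟩
  · have := c.isLt
    simpa [Fin.val_rev, show n - (c + 1) + 1 = n - c by omega] using h c.rev
  · have := i.isLt
    simpa [Fin.val_rev, show n - (n - (i + 1)) = i + 1 by omega] using h i.rev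

theorem isPFHS_perm_iff (σ : Equiv.Perm (Fin n)) :
    IsPFHS a (b ∘ σ) (fun c => (σ c : ℕ) + 1) ↔
      (∀ i, 1 ≤ b i) ∧ (∀ c, b (σ c) ≤ a (n - c)) ∧ Monotone (cellKey b ∘ σ) := by
  have hinj : Function.Injective fun c => (σ c : ℕ) + 1 := fun c d h =>
    σ.injective (Fin.ext (by simpa using h))
  have hlt : ∀ c d, (σ c : ℕ) + 1 < σ d + 1 ↔ σ c < σ d := fun c d =>
    Nat.add_lt_add_iff_right.trans Fin.lt_def.symm
  rw [monotone_cellKey_comp_iff]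
  constructor
  · rintro ⟨hrow, hanti, -, -, hodd⟩
    exact ⟨σ.surjective.forall.mpr fun c => (hrow c).1, fun c => (hrow c).2,
      fun c d hcd => hanti c d hcd, fun c d hcd hb => (hodd c d hcd hb).trans (hlt c d)⟩
  · rintro ⟨hpos, hle, hanti, hodd⟩
    exact ⟨fun c => ⟨hpos (σ c), hle c⟩, fun c d hcd => hanti hcd,
      fun c => ⟨Nat.le_add_left 1 _, (σ c).isLt⟩, hinj,
      fun c d hcd hb => (hodd c d hcd hb).trans (hlt c d).symm⟩

theorem stripOf_isPFHS (hb : IsAPF a b) : IsPFHS a (stripOf b).1 (stripOf b).2 := by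
  have hmono := Tuple.monotone_sort (cellKey b)
  have hanti := ((monotone_cellKey_comp_iff _).mp hmono).1
  exact (isPFHS_perm_iff _).mpr ⟨hb.1, ((isAPF_iff_of_antitone _ hanti).mp hb).2, hmono⟩

theorem stripOf_injective : Function.Injective (stripOf (n := n)) := by
  intro b b' h
  obtain ⟨hrow, hnum⟩ := Prod.mk.inj h
  have hσ : Tuple.sort (cellKey b) = Tuple.sort (cellKey b') :=
    Equiv.ext fun c => Fin.ext (by simpa using congrFun hnum c)
  rw [hσ] at hrow
  exact (Tuple.sort (cellKey b')).surjective.injective_comp_right hrow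

theorem IsPFHS.exists_perm {row num : Fin n → ℕ} (h : IsPFHS a row num) :
    ∃ σ : Equiv.Perm (Fin n), num = fun c => (σ c : ℕ) + 1 := by
  have hlt : ∀ c, num c - 1 < n := fun c => by have := h.num_le c; have := h.one_le_num c; omega
  have hinj : Function.Injective fun c => (⟨num c - 1, hlt c⟩ : Fin n) := fun c d hcd => by
    have := h.one_le_num c
    have := h.one_le_num d
    exact h.num_injective (by simp only [Fin.mk.injEq] at hcd; omega)
  refine ⟨Equiv.ofBijective _ (Finite.injective_iff_bijective.mp hinj), funext fun c => ?_⟩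
  have := h.one_le_num c
  simp only [Equiv.ofBijective_apply]
  omega

theorem exists_stripOf_eq {H : (Fin n → ℕ) × (Fin n → ℕ)} (h : IsPFHS a H.1 H.2) :
    ∃ b, IsAPF a b ∧ stripOf b = H := by
  obtain ⟨row, num⟩ := H
  obtain ⟨σ, rfl⟩ := h.exists_perm
  have hrow : row = (row ∘ σ.symm) ∘ σ := by ext; simp
  have h' : IsPFHS a ((row ∘ σ.symm) ∘ σ) fun c => (σ c : ℕ) + 1 := by rw [← hrow]; exact h
  obtain ⟨hpos, hle, hmono⟩ := (isPFHS_perm_iff σ).mp h'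
  have hσ := (eq_sort_cellKey_iff σ).mpr hmono
  refine ⟨row ∘ σ.symm, (isAPF_iff_of_antitone σ ((monotone_cellKey_comp_iff σ).mp hmono).1).mpr
    ⟨hpos, hle⟩, ?_⟩
  rw [stripOf, ← hσ, ← hrow]

theorem sCells_stripOf (hmono : MonotoneOn a (Set.Icc 1 n)) (hb : IsAPF a b) :
    sCells a (stripOf b).1 = ∑ i, b i - n := by
  have hsum : ∑ c, (stripOf b).1 c = ∑ i, b i := Equiv.sum_comp _ b
  have := sCells_add_eq_sum hmono (stripOf_isPFHS hb).1
  omega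

theorem bijOn_stripOf :
    Set.BijOn stripOf {b : Fin n → ℕ | IsAPF a b} {H | IsPFHS a H.1 H.2} :=
  ⟨fun _ hb => stripOf_isPFHS hb, stripOf_injective.injOn, fun _ h => exists_stripOf_eq h⟩

theorem finsum_isAPF_eq_finsum_isPFHS (hmono : MonotoneOn a (Set.Icc 1 n)) :
    ∑ᶠ b ∈ {b : Fin n → ℕ | IsAPF a b}, (-1 : ℤ) ^ (∑ i, b i - n) =
      ∑ᶠ H ∈ {H : (Fin n → ℕ) × (Fin n → ℕ) | IsPFHS a H.1 H.2}, (-1 : ℤ) ^ sCells a H.1 :=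
  finsum_mem_eq_of_bijOn stripOf bijOn_stripOf fun _ hb => by rw [sCells_stripOf hmono hb]

end Counting

theorem stmt11_general (n : ℕ) (a : ℕ → ℕ)
    (hmono : ∀ i j, 1 ≤ i → i ≤ j → j ≤ n → a i ≤ a j) :
    (∀ H : (Fin n → ℕ) × (Fin n → ℕ),
      IsPFHS a H.1 H.2 → (moveSet a H.1 H.2).Nonempty →
        (IsPFHS a (psiFn a H).1 (psiFn a H).2 ∧
          (moveSet a (psiFn a H).1 (psiFn a H).2).Nonempty) ∧
        psiFn a (psiFn a H) = H ∧
        psiFn a H ≠ H ∧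
        (sCells a (psiFn a H).1 = sCells a H.1 + 1 ∨
          sCells a H.1 = sCells a (psiFn a H).1 + 1)) ∧
    (∑ᶠ H ∈ {H : (Fin n → ℕ) × (Fin n → ℕ) |
        IsPFHS a H.1 H.2 ∧ (moveSet a H.1 H.2).Nonempty},
      ((-1 : ℤ) ^ sCells a H.1)) = 0 ∧
    (∑ᶠ b ∈ {b : Fin n → ℕ | IsAPF a b}, ((-1 : ℤ) ^ ((∑ i, b i) - n))) =
      ∑ᶠ H ∈ {H : (Fin n → ℕ) × (Fin n → ℕ) |
          IsPFHS a H.1 H.2 ∧ ¬(moveSet a H.1 H.2).Nonempty},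
        ((-1 : ℤ) ^ sCells a H.1) := by
  have hmono' : MonotoneOn a (Set.Icc 1 n) := fun i hi j hj hij => hmono i j hi.1 hij hj.2
  refine ⟨fun H h hne => psiFn_spec hmono' h hne, finsum_sign_moveable_eq_zero hmono', ?_⟩
  calc _ = ∑ᶠ H ∈ {H : (Fin n → ℕ) × (Fin n → ℕ) | IsPFHS a H.1 H.2}, (-1 : ℤ) ^ sCells a H.1 :=
        finsum_isAPF_eq_finsum_isPFHS hmono'
    _ = (∑ᶠ H ∈ {H : (Fin n → ℕ) × (Fin n → ℕ) |
            IsPFHS a H.1 H.2 ∧ (moveSet a H.1 H.2).Nonempty}, (-1 : ℤ) ^ sCells a H.1) +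
          ∑ᶠ H ∈ {H : (Fin n → ℕ) × (Fin n → ℕ) |
            IsPFHS a H.1 H.2 ∧ ¬(moveSet a H.1 H.2).Nonempty}, (-1 : ℤ) ^ sCells a H.1 :=
        (finsum_mem_inter_add_sdiff _ setOf_isPFHS_finite).symm
    _ = _ := by rw [finsum_sign_moveable_eq_zero hmono', zero_add]

/-- `ψ` maps `𝓗̃_a` (the strips with at least one moveable cell) to itself, is a
fixed-point-free involution there, and changes `s(H)` by exactly `1`; consequently
`Σ_{H ∈ 𝓗̃_a} (-1)^{s(H)} = 0` and `I_a(-1) = Σ_{H ∈ 𝓗_a ∖ 𝓗̃_a} (-1)^{s(H)}`. -/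
theorem stmt11 (n : ℕ) (hn : 1 ≤ n) (a : ℕ → ℕ)
    (hpos : ∀ i, 1 ≤ i → i ≤ n → 1 ≤ a i)
    (hmono : ∀ i j, 1 ≤ i → i ≤ j → j ≤ n → a i ≤ a j) :
    (∀ H : (Fin n → ℕ) × (Fin n → ℕ),
      IsPFHS a H.1 H.2 → (moveSet a H.1 H.2).Nonempty →
        (IsPFHS a (psiFn a H).1 (psiFn a H).2 ∧
          (moveSet a (psiFn a H).1 (psiFn a H).2).Nonempty) ∧
        psiFn a (psiFn a H) = H ∧
        psiFn a H ≠ H ∧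
        (sCells a (psiFn a H).1 = sCells a H.1 + 1 ∨
          sCells a H.1 = sCells a (psiFn a H).1 + 1)) ∧
    (∑ᶠ H ∈ {H : (Fin n → ℕ) × (Fin n → ℕ) |
        IsPFHS a H.1 H.2 ∧ (moveSet a H.1 H.2).Nonempty},
      ((-1 : ℤ) ^ sCells a H.1)) = 0 ∧
    (∑ᶠ b ∈ {b : Fin n → ℕ | IsAPF a b}, ((-1 : ℤ) ^ ((∑ i, b i) - n))) =
      ∑ᶠ H ∈ {H : (Fin n → ℕ) × (Fin n → ℕ) |
          IsPFHS a H.1 H.2 ∧ ¬(moveSet a H.1 H.2).Nonempty},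
        ((-1 : ℤ) ^ sCells a H.1) :=
  stmt11_general n a hmono
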